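/- Let M ⊆ ℤ[i] be a set such that for every prime element p of ℤ[i], M contains an (n, p)-universal subset. Then M is an n-universal set. -/

import Mathlib

open Polynomial

/-- The fraction field of the Gaussian integers. -/
abbrev FF : Type := FractionRing GaussianInt

/-- The canonical embedding of `ℤ[i]` into its fraction field. -/
noncomputable def ι : GaussianInt →+* FF := algebraMap GaussianInt FF

/-- A polynomial with coefficients in the fraction field of `ℤ[i]` is integer-valued
if it takes values in (the image of) `ℤ[i]` at every Gaussian integer. -/
def IntegerValued (f : FF[X]) : Prop :=
  ∀ z : GaussianInt, f.eval (ι z) ∈ Set.range ι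

/-- A set `M ⊆ ℤ[i]` is `n`-universal if every polynomial of degree at most `n`
with coefficients in the fraction field of `ℤ[i]` taking integer values on `M`
is integer-valued. -/
def IsNUniversal (n : ℕ) (M : Set GaussianInt) : Prop :=
  ∀ f : FF[X], f.natDegree ≤ n → (∀ c ∈ M, f.eval (ι c) ∈ Set.range ι) → IntegerValued f

/-- `M(r mod α)`: the elements of `M` congruent to `r` modulo `α`. -/
def ResidueSet (M : Finset GaussianInt) (α r : GaussianInt) : Set GaussianInt :=
  (M : Set GaussianInt) ∩ {z | α ∣ z - r}

/-- A finite set `M ⊆ ℤ[i]` is almost uniformly distributed modulo `α` if the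
cardinalities of any two residue classes of `M` modulo `α` are equal or differ by one. -/
def AlmostUnifDist (M : Finset GaussianInt) (α : GaussianInt) : Prop :=
  ∀ r s : GaussianInt,
    (ResidueSet M α r).ncard = (ResidueSet M α s).ncard ∨
    (ResidueSet M α r).ncard + 1 = (ResidueSet M α s).ncard ∨
    (ResidueSet M α s).ncard + 1 = (ResidueSet M α r).ncard

/-!
An element of the fraction field of a UFD that is `p`-integral for every prime `p` is integral,
so fix a prime `p`, a point `z`, and the `(n, p)`-universal subset `C ⊆ M`. Lagrange
interpolation at the `n + 1` points of `C` gives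
`f(z) = ∑_{c ∈ C} f(c) · ∏_{c' ≠ c} (z - c') / ∏_{c' ≠ c} (c - c')`. The `p`-adic valuation of
`∏_{c' ≠ c} (x - c')` is `∑_{k ≥ 1} #{c' ≠ c | p^k ∣ x - c'}`, and almost uniform distribution
of `C` modulo `p^k` makes each of these counts smallest at `x = c`, so every Lagrange
coefficient is `p`-integral.
-/

open Finset

section Multiplicity

variable {α : Type*}

open scoped Classical

theorem emultiplicity_eq_card_filter_pow_dvd [Monoid α] {p y : α} {K : ℕ}
    (hK : emultiplicity p y ≤ K) :
    emultiplicity p y = #{k ∈ Icc 1 K | p ^ k ∣ y} := by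
  obtain ⟨m, hm⟩ := ENat.ne_top_iff_exists.mp (ne_top_of_le_ne_top (by simp) hK)
  have hfilter : {k ∈ Icc 1 K | p ^ k ∣ y} = Icc 1 m := by
    ext k
    simp only [mem_filter, mem_Icc, pow_dvd_iff_le_emultiplicity, ← hm, Nat.cast_le]
    rw [← hm, Nat.cast_le] at hK
    omega
  rw [hfilter, Nat.card_Icc, ← hm]
  simp

variable [CommMonoidWithZero α] [IsCancelMulZero α] {ι : Type*} {p : α}

theorem emultiplicity_prod_eq_sum_card_filter (hp : Prime p) (S : Finset ι) (x : ι → α) {K : ℕ}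
    (hK : emultiplicity p (∏ j ∈ S, x j) ≤ K) :
    emultiplicity p (∏ j ∈ S, x j) = ∑ k ∈ Icc 1 K, #{j ∈ S | p ^ k ∣ x j} := by
  rw [Finset.emultiplicity_prod hp] at hK ⊢
  have hterm : ∀ j ∈ S, emultiplicity p (x j) = #{k ∈ Icc 1 K | p ^ k ∣ x j} := fun j hj =>
    emultiplicity_eq_card_filter_pow_dvd
      ((single_le_sum (f := fun j => emultiplicity p (x j)) (fun _ _ => zero_le) hj).trans hK)
  rw [sum_congr rfl hterm]
  simp only [card_filter]
  push_cast
  exact sum_comm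

theorem emultiplicity_prod_le_of_card_filter_le (hp : Prime p) {S : Finset ι} {x y : ι → α}
    (hx : emultiplicity p (∏ j ∈ S, x j) ≠ ⊤)
    (h : ∀ k, 0 < k → #{j ∈ S | p ^ k ∣ x j} ≤ #{j ∈ S | p ^ k ∣ y j}) :
    emultiplicity p (∏ j ∈ S, x j) ≤ emultiplicity p (∏ j ∈ S, y j) := by
  rcases eq_or_ne (emultiplicity p (∏ j ∈ S, y j)) ⊤ with hy | hy
  · exact hy ▸ le_top
  obtain ⟨a, ha⟩ := ENat.ne_top_iff_exists.mp hx
  obtain ⟨b, hb⟩ := ENat.ne_top_iff_exists.mp hy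
  rw [emultiplicity_prod_eq_sum_card_filter hp S x (K := a + b) (by rw [← ha]; simp),
    emultiplicity_prod_eq_sum_card_filter hp S y (K := a + b) (by rw [← hb]; simp)]
  exact_mod_cast sum_le_sum fun k hk => h k (mem_Icc.mp hk).1

end Multiplicity

section Localization

variable {A : Type*} (K : Type*) [CommRing A] [IsDomain A] [Field K] [Algebra A K]
  [IsFractionRing A K] {p : A}

noncomputable def atPrimeSubalgebra (hp : Prime p) : Subalgebra A K :=
  haveI := (Ideal.span_singleton_prime hp.ne_zero).mpr hp
  Localization.subalgebra.ofField K (Ideal.span {p}).primeCompl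
    (Ideal.primeCompl_le_nonZeroDivisors _)

variable {K}

theorem mem_atPrimeSubalgebra_iff (hp : Prime p) {x : K} :
    x ∈ atPrimeSubalgebra K hp ↔
      ∃ a s : A, ¬p ∣ s ∧ x = algebraMap A K a * (algebraMap A K s)⁻¹ := by
  have := (Ideal.span_singleton_prime hp.ne_zero).mpr hp
  change (∃ a s, ∃ _ : s ∈ Ideal.primeCompl _, _) ↔ _
  simp only [Ideal.mem_primeCompl_iff, Ideal.mem_span_singleton, exists_prop]

theorem div_mem_atPrimeSubalgebra [WfDvdMonoid A] (hp : Prime p) {a b : A} (hb : b ≠ 0)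
    (hab : emultiplicity p b ≤ emultiplicity p a) :
    algebraMap A K a / algebraMap A K b ∈ atPrimeSubalgebra K hp := by
  have hfin := FiniteMultiplicity.of_not_isUnit hp.not_isUnit hb
  obtain ⟨u, hbu, hu⟩ := hfin.exists_eq_pow_mul_and_not_dvd
  set m := multiplicity p b
  obtain ⟨c, rfl⟩ : p ^ m ∣ a :=
    pow_dvd_iff_le_emultiplicity.mpr (hfin.emultiplicity_eq_multiplicity ▸ hab)
  have hpm : algebraMap A K (p ^ m) ≠ 0 :=
    IsFractionRing.to_map_ne_zero_of_mem_nonZeroDivisors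
      (mem_nonZeroDivisors_of_ne_zero (pow_ne_zero _ hp.ne_zero))
  refine (mem_atPrimeSubalgebra_iff hp).mpr ⟨c, u, hu, ?_⟩
  rw [hbu, map_mul, map_mul, mul_div_mul_left _ _ hpm, div_eq_mul_inv]

theorem isInteger_of_forall_mem_atPrimeSubalgebra [UniqueFactorizationMonoid A] {x : K}
    (h : ∀ (p : A) (hp : Prime p), x ∈ atPrimeSubalgebra K hp) :
    IsLocalization.IsInteger A x := by
  -- A prime factor `q` of the reduced denominator of `x` would have to divide its numerator.
  refine IsFractionRing.isInteger_of_isUnit_den (by_contra fun hd => ?_)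
  obtain ⟨q, hq, hqd⟩ := WfDvdMonoid.exists_irreducible_factor hd
    (nonZeroDivisors.coe_ne_zero _)
  have hq := UniqueFactorizationMonoid.irreducible_iff_prime.mp hq
  obtain ⟨a, s, hs, hx⟩ := (mem_atPrimeSubalgebra_iff hq).mp (h q hq)
  set n := IsFractionRing.num A x
  set d := IsFractionRing.den A x
  have hnd : x * algebraMap A K d = algebraMap A K n :=
    IsFractionRing.num_mul_den_eq_num_iff_eq.mpr rfl
  have hs0 : algebraMap A K s ≠ 0 := fun h0 =>
    hs (((IsFractionRing.to_map_eq_zero_iff (K := K)).mp h0) ▸ dvd_zero q)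
  have hcross : n * s = a * d := by
    apply IsFractionRing.injective A K
    rw [map_mul, map_mul, ← hnd, hx]
    field_simp
  have hqn : q ∣ n := (hq.dvd_or_dvd (hcross ▸ dvd_mul_of_dvd_right hqd a)).resolve_right hs
  exact hq.not_isUnit (IsFractionRing.num_den_reduced A x hqn hqd)

end Localization

namespace Lagrange

variable {F ι : Type*} [Field F] [DecidableEq ι] {s : Finset ι} {v : ι → F}

theorem eval_basis (i : ι) (x : F) :
    (Lagrange.basis s v i).eval x =
      (∏ j ∈ s.erase i, (x - v j)) / ∏ j ∈ s.erase i, (v i - v j) := by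
  simp only [Lagrange.basis, eval_prod, basisDivisor, eval_mul, eval_C, eval_sub, eval_X,
    prod_mul_distrib, prod_inv_distrib]
  rw [div_eq_mul_inv, mul_comm]

theorem eval_eq_sum_of_degree_lt (hvs : Set.InjOn v s) {f : F[X]} (hf : f.degree < #s) (x : F) :
    f.eval x = ∑ i ∈ s, f.eval (v i) *
      ((∏ j ∈ s.erase i, (x - v j)) / ∏ j ∈ s.erase i, (v i - v j)) := by
  conv_lhs => rw [eq_interpolate hvs hf]
  simp only [interpolate_apply, eval_finsetSum, eval_mul, eval_C, eval_basis]

end Lagrange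

theorem prod_erase_sub_ne_zero {R : Type*} [CommRing R] [IsDomain R] [DecidableEq R]
    (s : Finset R) (a : R) : ∏ j ∈ s.erase a, (a - j) ≠ 0 :=
  prod_ne_zero_iff.mpr fun _ hj => sub_ne_zero.mpr (ne_of_mem_erase hj).symm

open scoped Classical in
theorem ncard_residueSet (C : Finset GaussianInt) (α r : GaussianInt) :
    (ResidueSet C α r).ncard = #{j ∈ C | α ∣ r - j} := by
  rw [← Set.ncard_coe_finset, ResidueSet, coe_filter]
  congr 1
  ext j
  simp [dvd_sub_comm]

open scoped Classical in
theorem AlmostUnifDist.card_filter_dvd_sub_le {C : Finset GaussianInt} {α : GaussianInt}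
    (hC : AlmostUnifDist C α) {i : GaussianInt} (hi : i ∈ C) (z : GaussianInt) :
    #{j ∈ C.erase i | α ∣ i - j} ≤ #{j ∈ C.erase i | α ∣ z - j} := by
  by_cases hzi : α ∣ z - i
  · refine card_le_card fun j => ?_
    simp only [mem_filter]
    refine fun ⟨hj, hij⟩ => ⟨hj, ?_⟩
    simpa using dvd_add hzi hij
  · have hiC : #{j ∈ C.erase i | α ∣ i - j} + 1 = #{j ∈ C | α ∣ i - j} := by
      rw [filter_erase, card_erase_add_one (by simp [hi])]
    have hzC : #{j ∈ C.erase i | α ∣ z - j} = #{j ∈ C | α ∣ z - j} := by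
      rw [filter_erase, erase_eq_of_notMem (by simp [hzi])]
    have := hC i z
    rw [ncard_residueSet, ncard_residueSet] at this
    omega

theorem emultiplicity_prod_sub_le {p : GaussianInt} (hp : Prime p) {C : Finset GaussianInt}
    (hC : ∀ k : ℕ, 0 < k → AlmostUnifDist C (p ^ k)) {i : GaussianInt} (hi : i ∈ C)
    (z : GaussianInt) :
    emultiplicity p (∏ j ∈ C.erase i, (i - j)) ≤ emultiplicity p (∏ j ∈ C.erase i, (z - j)) := by
  refine emultiplicity_prod_le_of_card_filter_le hp ?_ fun k hk =>
    (hC k hk).card_filter_dvd_sub_le hi z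
  exact finiteMultiplicity_iff_emultiplicity_ne_top.mp
    (.of_not_isUnit hp.not_isUnit (prod_erase_sub_ne_zero C i))

/-- If `M ⊆ ℤ[i]` contains, for every prime `p` of `ℤ[i]`, an `(n, p)`-universal
subset (a subset of cardinality `n + 1` almost uniformly distributed modulo every
power of `p`), then `M` is `n`-universal. -/
theorem universal_of_np_universal_subsets (n : ℕ) (M : Set GaussianInt)
    (h : ∀ p : GaussianInt, Prime p → ∃ C : Finset GaussianInt,
      (C : Set GaussianInt) ⊆ M ∧ C.card = n + 1 ∧
        ∀ k : ℕ, 0 < k → AlmostUnifDist C (p ^ k)) :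
    IsNUniversal n M := by
  intro f hdeg hM z
  refine isInteger_of_forall_mem_atPrimeSubalgebra (K := FF) fun p hp => ?_
  obtain ⟨C, hCM, hcard, hC⟩ := h p hp
  have hf : f.degree < #C :=
    hcard ▸ degree_le_natDegree.trans_lt (by exact_mod_cast Nat.lt_succ_of_le hdeg)
  rw [Lagrange.eval_eq_sum_of_degree_lt (IsFractionRing.injective GaussianInt FF).injOn hf]
  refine Subalgebra.sum_mem _ fun i hi => Subalgebra.mul_mem _ ?_ ?_
  · obtain ⟨w, hw⟩ := hM i (hCM hi)
    exact hw ▸ Subalgebra.algebraMap_mem _ w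
  · simp only [ι, ← map_sub, ← map_prod]
    exact div_mem_atPrimeSubalgebra (K := FF) hp (prod_erase_sub_ne_zero C i)
      (emultiplicity_prod_sub_le hp hC hi z)
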